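/- arXiv:2402.17528 — 5 statements merged into one kernel-verified Lean document; each statement's English description precedes it below -/
import Mathlib

section
/- Let $v, t$ be positive integers and $\mathfrak{B}$ a family of subsets of $\{1,\dots,v\}$. Suppose for each $i \in \{0,1,\dots,t\}$ there exists $\mu_i$ such that $\mu_{\mathfrak{B}}(\beta) = \mu_i$ for all $i$-element subsets $\beta$ of $\{1,\dots,v\}$, where $\mu_{\mathfrak{B}}(\beta)$ is the number of members of $\mathfrak{B}$ disjoint from $\beta$. Then for each $i \le t$ and each $i$-element subset $\beta$, the number $\lambda_{\mathfrak{B}}(\beta)$ of members of $\mathfrak{B}$ containing $\beta$ equals $\sum_{j=0}^{i} (-1)^j \binom{i}{j} \mu_j$. In particular, $\lambda_{\mathfrak{B}}(\beta)$ depends only on $|\beta|$, so $(\{1,\dots,v\},\mathfrak{B})$ is a $t$-design (with possibly varying block sizes). -/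
open Finset

/-!
Inclusion–exclusion on the complement: for a fixed block `a`, the alternating sum of
`(-1) ^ #γ` over the subsets `γ ⊆ β` disjoint from `a` runs over the powerset of `β \ a`,
so it is `1` if `β ⊆ a` and `0` otherwise. Summing over the blocks expresses `λ(β)` as
`∑_{γ ⊆ β} (-1) ^ #γ μ(γ)`, and when `μ(γ)` depends only on `#γ` the `#β.choose j`
subsets of size `j` collect into the stated binomial sum.
-/

namespace Finset

variable {α : Type*} [DecidableEq α]

theorem sum_powerset_filter_disjoint_neg_one_pow_card (β a : Finset α) :
    ∑ γ ∈ β.powerset with Disjoint γ a, (-1 : ℤ) ^ #γ = if β ⊆ a then 1 else 0 := by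
  have hfilter : {γ ∈ β.powerset | Disjoint γ a} = (β \ a).powerset := by
    ext γ
    simp only [mem_filter, mem_powerset, subset_sdiff]
  simp only [hfilter, sum_powerset_neg_one_pow_card, sdiff_eq_empty_iff_subset]

theorem card_filter_superset_eq_sum_powerset (B : Finset (Finset α)) (β : Finset α) :
    (#{a ∈ B | β ⊆ a} : ℤ) =
      ∑ γ ∈ β.powerset, (-1 : ℤ) ^ #γ * (#{a ∈ B | Disjoint γ a} : ℤ) := by
  calc (#{a ∈ B | β ⊆ a} : ℤ)
      = ∑ a ∈ B, if β ⊆ a then 1 else 0 := by rw [sum_boole]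
    _ = ∑ a ∈ B, ∑ γ ∈ β.powerset with Disjoint γ a, (-1 : ℤ) ^ #γ := by
      simp only [sum_powerset_filter_disjoint_neg_one_pow_card]
    _ = ∑ γ ∈ β.powerset, ∑ a ∈ B with Disjoint γ a, (-1 : ℤ) ^ #γ := by
      simp only [sum_filter]
      exact sum_comm
    _ = ∑ γ ∈ β.powerset, (-1 : ℤ) ^ #γ * (#{a ∈ B | Disjoint γ a} : ℤ) := by
      refine sum_congr rfl fun γ _ => ?_
      rw [sum_const, nsmul_eq_mul, mul_comm]

end Finset

theorem lambda_of_constant_mu_general (v t : ℕ) (B : Finset (Finset (Fin v)))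
    (μ : ℕ → ℕ)
    (hμ : ∀ i ≤ t, ∀ β : Finset (Fin v), β.card = i →
      (B.filter fun a => Disjoint β a).card = μ i) :
    ∀ i ≤ t, ∀ β : Finset (Fin v), β.card = i →
      (((B.filter fun a => β ⊆ a).card : ℤ)) =
        ∑ j ∈ Finset.range (i + 1), (-1 : ℤ) ^ j * (i.choose j : ℤ) * (μ j : ℤ) := by
  intro i hi β hβ
  have hμ_sub : ∀ γ ∈ β.powerset, (-1 : ℤ) ^ #γ * (#{a ∈ B | Disjoint γ a} : ℤ) =
      (-1 : ℤ) ^ #γ * (μ #γ : ℤ) := fun γ hγ => by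
    rw [hμ #γ ((card_le_card (mem_powerset.mp hγ)).trans (hβ ▸ hi)) γ rfl]
  rw [card_filter_superset_eq_sum_powerset, sum_congr rfl hμ_sub,
    sum_powerset_apply_card (fun j => (-1 : ℤ) ^ j * μ j), hβ]
  refine sum_congr rfl fun j _ => ?_
  rw [nsmul_eq_mul]
  ring

/-- If for each `i ≤ t` the number of blocks disjoint from an `i`-set is a constant `μ i`,
then the number of blocks containing any `i`-set is `∑_{j=0}^{i} (-1)^j (i choose j) μ j`;
in particular it depends only on `i`, so the family is a `t`-design. -/
theorem lambda_of_constant_mu (v t : ℕ) (ht : 0 < t) (B : Finset (Finset (Fin v)))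
    (μ : ℕ → ℕ)
    (hμ : ∀ i ≤ t, ∀ β : Finset (Fin v), β.card = i →
      (B.filter fun a => Disjoint β a).card = μ i) :
    ∀ i ≤ t, ∀ β : Finset (Fin v), β.card = i →
      (((B.filter fun a => β ⊆ a).card : ℤ)) =
        ∑ j ∈ Finset.range (i + 1), (-1 : ℤ) ^ j * (i.choose j : ℤ) * (μ j : ℤ) :=
  lambda_of_constant_mu_general v t B μ hμ
end

section
/- Let $t, v, k$ be positive integers and $A$ a $v \times v$ complex matrix such that: (1) the set of $k \times k$ principal minors of $A$ is exactly $\{a, b\}$ with $a \neq b$; (2) for each $i \in \{0,1,\dots,t\}$, the coefficient of $x^{v-k-i}$ in $\det(xI - A[\bar\beta])$ is the same constant $c_i$ for all $i$-element subsets $\beta$ of $\{1,\dots,v\}$. Then the family $\mathfrak{B} = \{\alpha \subseteq \{1,\dots,v\} : |\alpha| = k, \det(A[\alpha]) = a\}$ is the block set of a $t$-$(v,k,\lambda)$ design, i.e., every $t$-element subset of $\{1,\dots,v\}$ is contained in exactly $\lambda$ members of $\mathfrak{B}$, where $\lambda = \frac{(-1)^k \binom{k}{t}}{(a-b)\binom{v}{t}}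 c_0 - \frac{b}{a-b}\binom{v-t}{k-t}$. -/
/-!
Write `f α = det A[α]`. By the expansion of characteristic polynomials in principal minors,
hypothesis (2) says that for every `δ` with `|δ| ≤ t` the sum of `f` over the `k`-subsets of the
complement of `δ` is `(-1)^k c_{|δ|}`. Inclusion–exclusion over `δ ⊆ γ` turns this into: the sum of
`f` over the `k`-sets containing `γ` depends only on `|γ|`, for `|γ| ≤ t`. Double counting the pairs
`β ⊆ α` with `|β| = t`, `|α| = k` identifies this common value for `|β| = t` as
`(k choose t) (-1)^k c₀ / (v choose t)`, and since `f` only takes the values `a` and `b` on the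
`(v-t choose k-t)` blocks through `β`, the number of those with value `a` is determined.
The same two-valuedness excludes `t + k ≥ v` and `t ≥ k`, where `f` would be forced to be constant
on `k`-sets.
-/

open Matrix Finset Polynomial
open scoped Classical

noncomputable def principalSub {R : Type*} {n : ℕ} (A : Matrix (Fin n) (Fin n) R)
    (s : Finset (Fin n)) : Matrix s s R :=
  A.submatrix (fun i => (i : Fin n)) (fun i => (i : Fin n))

section Combinatorics

variable {ι : Type*} [DecidableEq ι]

theorem sum_powerset_disjoint_neg_one_pow_card (γ α : Finset ι) :
    ∑ δ ∈ γ.powerset with Disjoint δ α, (-1 : ℤ) ^ #δ = if γ ⊆ α then 1 else 0 := by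
  have hfilter : {δ ∈ γ.powerset | Disjoint δ α} = (γ \ α).powerset := by
    ext δ
    simp only [mem_filter, mem_powerset, subset_sdiff]
  simp only [hfilter, sum_powerset_neg_one_pow_card, sdiff_eq_empty_iff_subset]

theorem sum_filter_superset_eq_sum_powerset {G : Type*} [AddCommGroup G]
    (S : Finset (Finset ι)) (f : Finset ι → G) (γ : Finset ι) :
    ∑ α ∈ S with γ ⊆ α, f α =
      ∑ δ ∈ γ.powerset, (-1 : ℤ) ^ #δ • ∑ α ∈ S with Disjoint δ α, f α := by
  simp_rw [sum_filter, smul_sum, smul_ite, smul_zero]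
  rw [sum_comm]
  refine sum_congr rfl fun α _ => ?_
  rw [← sum_filter, ← sum_smul, sum_powerset_disjoint_neg_one_pow_card, ite_smul, one_smul,
    zero_smul]

variable [Fintype ι]

theorem sum_supersets_eq_of_sum_powersetCard_compl_eq {G : Type*} [AddCommGroup G]
    {f : Finset ι → G} {k t : ℕ} {d : ℕ → G}
    (hd : ∀ δ : Finset ι, #δ ≤ t → ∑ α ∈ powersetCard k δᶜ, f α = d #δ)
    {γ : Finset ι} (hγ : #γ ≤ t) :
    ∑ α ∈ powersetCard k (univ : Finset ι) with γ ⊆ α, f α =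
      ∑ j ∈ range (#γ + 1), (#γ).choose j • (-1 : ℤ) ^ j • d j := by
  have hdisjoint (δ : Finset ι) :
      {α ∈ powersetCard k (univ : Finset ι) | Disjoint δ α} = powersetCard k δᶜ := by
    ext α
    simp [subset_compl_iff_disjoint_left, and_comm]
  rw [sum_filter_superset_eq_sum_powerset, sum_congr rfl fun δ hδ => by
    rw [hdisjoint, hd δ ((card_le_card (mem_powerset.mp hδ)).trans hγ)]]
  exact sum_powerset_apply_card (fun j => (-1 : ℤ) ^ j • d j)

theorem sum_powersetCard_sum_supersets {M : Type*} [AddCommMonoid M] (t : ℕ)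
    (S : Finset (Finset ι)) (f : Finset ι → M) :
    ∑ β ∈ powersetCard t univ, ∑ α ∈ S with β ⊆ α, f α = ∑ α ∈ S, (#α).choose t • f α := by
  simp_rw [sum_filter]
  rw [sum_comm]
  refine sum_congr rfl fun α _ => ?_
  rw [← sum_filter, sum_const, ← card_powersetCard]
  congr 2
  ext β
  simp [mem_powersetCard, and_comm]

theorem choose_smul_eq_of_sum_supersets_eq {M : Type*} [AddCommMonoid M] {f : Finset ι → M}
    {k t : ℕ} {L : M}
    (hL : ∀ β : Finset ι, #β = t → ∑ α ∈ powersetCard k (univ : Finset ι) with β ⊆ α, f α = L) :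
    (Fintype.card ι).choose t • L = k.choose t • ∑ α ∈ powersetCard k (univ : Finset ι), f α := by
  have h := sum_powersetCard_sum_supersets t (powersetCard k (univ : Finset ι)) f
  rw [sum_congr rfl fun β hβ => hL β (mem_powersetCard.mp hβ).2, sum_const, card_powersetCard,
    card_univ] at h
  rw [h, smul_sum]
  exact sum_congr rfl fun α hα => by rw [(mem_powersetCard.mp hα).2]

end Combinatorics

theorem card_filter_eq_of_two_valued {X K : Type*} [Field K] [DecidableEq K] {S : Finset X}
    {f : X → K} {a b : K} (hab : a ≠ b) (hf : ∀ x ∈ S, f x = a ∨ f x = b) :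
    (#{x ∈ S | f x = a} : K) = (∑ x ∈ S, f x - b * #S) / (a - b) := by
  have hsum : ∑ x ∈ S, f x = a * #{x ∈ S | f x = a} + b * #{x ∈ S | ¬f x = a} := by
    have hb : ∀ x ∈ S.filter (¬f · = a), f x = b := fun x hx =>
      (hf x (mem_filter.mp hx).1).resolve_left (mem_filter.mp hx).2
    rw [← sum_filter_add_sum_filter_not S (f · = a),
      sum_congr rfl fun x hx => (mem_filter.mp hx).2, sum_congr rfl hb]
    simp only [sum_const, nsmul_eq_mul, mul_comm]
  have hcard : (#S : K) = #{x ∈ S | f x = a} + #{x ∈ S | ¬f x = a} := by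
    rw [← Nat.cast_add, card_filter_add_card_filter_not]
  rw [eq_div_iff (sub_ne_zero.mpr hab), hsum, hcard]
  ring

theorem exists_ne_of_image_eq_pair {X Y : Type*} [DecidableEq Y] {s : Finset X} {f : X → Y}
    {a b : Y} (h : s.image f = {a, b}) (hab : a ≠ b) (y : Y) : ∃ x ∈ s, f x ≠ y := by
  by_contra! hconst
  have hsub : s.image f ⊆ {y} := fun z hz => by
    obtain ⟨x, hx, rfl⟩ := mem_image.mp hz
    exact mem_singleton.mpr (hconst x hx)
  rw [h] at hsub
  exact hab ((mem_singleton.mp (hsub (by simp))).trans (mem_singleton.mp (hsub (by simp))).symm)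

theorem sum_minors_submatrix_subtype {m R : Type*} [DecidableEq m] [CommRing R]
    (M : Matrix m m R) (s : Finset m) (k : ℕ) :
    ∑ u ∈ powersetCard k (univ : Finset s),
        ((M.submatrix (Subtype.val : s → m) Subtype.val).submatrix (Subtype.val : u → s)
          Subtype.val).det =
      ∑ w ∈ powersetCard k s, (M.submatrix (Subtype.val : w → m) Subtype.val).det := by
  conv_rhs => rw [← attach_map_val (s := s), powersetCard_map, sum_map, ← univ_eq_attach]
  refine sum_congr rfl fun u _ => ?_
  exact det_submatrix_equiv_self (equivMap (Function.Embedding.subtype _) u)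
    (M.submatrix (Subtype.val : _ → m) Subtype.val)

theorem charpoly_submatrix_coeff_eq_sum_minors {m R : Type*} [Fintype m] [DecidableEq m]
    [CommRing R] (M : Matrix m m R) (s : Finset m) {k : ℕ} (hk : k ≤ #s) :
    (M.submatrix (Subtype.val : s → m) Subtype.val).charpoly.coeff (#s - k) =
      (-1) ^ k * ∑ w ∈ powersetCard k s, (M.submatrix (Subtype.val : w → m) Subtype.val).det := by
  rw [← sum_minors_submatrix_subtype, ← charpoly_coeff_eq_sum_minors _ k (by simpa using hk),
    Fintype.card_coe]

section Constancy

variable {ι K : Type*} [Fintype ι] [DecidableEq ι] {f : Finset ι → K} {k t : ℕ}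

theorem eq_of_sum_powersetCard_compl_eq [AddCommMonoid K] {d : ℕ → K}
    (hd : ∀ δ : Finset ι, #δ ≤ t → k + #δ ≤ Fintype.card ι →
      ∑ α ∈ powersetCard k δᶜ, f α = d #δ)
    (h : Fintype.card ι ≤ t + k) :
    ∀ α ∈ powersetCard k (univ : Finset ι), f α = d (Fintype.card ι - k) := by
  intro α hα
  have hαk := (mem_powersetCard.mp hα).2
  have hαv := card_le_univ α
  have := hd αᶜ (by rw [card_compl]; omega) (by rw [card_compl]; omega)
  rw [compl_compl, card_compl, ← hαk, powersetCard_self, sum_singleton] at this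
  rwa [← hαk]

theorem eq_of_sum_supersets_eq [AddCommMonoid K] {g : ℕ → K}
    (hg : ∀ γ : Finset ι, #γ ≤ t →
      ∑ α ∈ powersetCard k (univ : Finset ι) with γ ⊆ α, f α = g #γ)
    (h : k ≤ t) :
    ∀ α ∈ powersetCard k (univ : Finset ι), f α = g k := by
  intro α hα
  have hαk := (mem_powersetCard.mp hα).2
  have hsingle : {α' ∈ powersetCard k (univ : Finset ι) | α ⊆ α'} = {α} := by
    ext α'
    simp only [mem_filter, mem_powersetCard, mem_singleton, subset_univ, true_and]
    exact ⟨fun ⟨hk, hsub⟩ => (eq_of_subset_of_card_le hsub (by omega)).symm,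
      fun h => ⟨h ▸ hαk, h ▸ subset_rfl⟩⟩
  rw [← hαk, ← hg α (by omega), hsingle, sum_singleton]

end Constancy

theorem card_filter_superset_eq_of_two_valued {ι K : Type*} [Fintype ι] [DecidableEq ι]
    [Field K] [CharZero K] [DecidableEq K] {f : Finset ι → K} {k t : ℕ} {a b : K} (hab : a ≠ b)
    (himg : (powersetCard k (univ : Finset ι)).image f = {a, b}) {d : ℕ → K}
    (hd : ∀ δ : Finset ι, #δ ≤ t → k + #δ ≤ Fintype.card ι →
      ∑ α ∈ powersetCard k δᶜ, f α = d #δ)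
    (β : Finset ι) (hβ : #β = t) :
    (#{α ∈ powersetCard k (univ : Finset ι) | β ⊆ α ∧ f α = a} : K) =
      k.choose t * d 0 / ((a - b) * (Fintype.card ι).choose t) -
        b / (a - b) * (Fintype.card ι - t).choose (k - t) := by
  have hval : ∀ α ∈ powersetCard k (univ : Finset ι), f α = a ∨ f α = b := fun α hα => by
    simpa [himg] using mem_image_of_mem f hα
  have hnonconst := exists_ne_of_image_eq_pair himg hab
  have htkv : t + k < Fintype.card ι := by
    by_contra! h
    obtain ⟨α, hα, hne⟩ := hnonconst _
    exact hne (eq_of_sum_powersetCard_compl_eq hd h α hα)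
  obtain ⟨g, hg⟩ : ∃ g : ℕ → K, ∀ γ : Finset ι, #γ ≤ t →
      ∑ α ∈ powersetCard k (univ : Finset ι) with γ ⊆ α, f α = g #γ :=
    ⟨fun n => ∑ j ∈ range (n + 1), n.choose j • (-1 : ℤ) ^ j • d j, fun _ hγ =>
      sum_supersets_eq_of_sum_powersetCard_compl_eq (fun δ hδ => hd δ hδ (by omega)) hγ⟩
  have htk : t < k := by
    by_contra! h
    obtain ⟨α, hα, hne⟩ := hnonconst _
    exact hne (eq_of_sum_supersets_eq hg h α hα)
  have htotal : ∑ α ∈ powersetCard k (univ : Finset ι), f α = d 0 := by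
    simpa using hd ∅ (by simp) (by simp; omega)
  have hdouble := choose_smul_eq_of_sum_supersets_eq (fun β' hβ' => hβ' ▸ hg β' hβ'.le)
  rw [htotal, nsmul_eq_mul, nsmul_eq_mul] at hdouble
  rw [← filter_filter, card_filter_eq_of_two_valued hab fun α hα => hval α (mem_filter.mp hα).1,
    card_filter_powersetCard_subset _ _ _ (subset_univ β) (by omega), hg β hβ.le, card_univ, hβ]
  have hchoose : ((Fintype.card ι).choose t : K) ≠ 0 := by
    exact_mod_cast (Nat.choose_pos (by omega)).ne'
  field_simp [sub_ne_zero.mpr hab]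
  linear_combination hdouble

theorem design_from_matrix_general {v t k : ℕ}
    (A : Matrix (Fin v) (Fin v) ℂ) (a b : ℂ) (hab : a ≠ b) (c : ℕ → ℂ)
    (h1 : (Finset.powersetCard k (Finset.univ : Finset (Fin v))).image
        (fun s => (principalSub A s).det) = {a, b})
    (h2 : ∀ i ≤ t, ∀ β : Finset (Fin v), β.card = i →
      (principalSub A βᶜ).charpoly.coeff (v - k - i) = c i) :
    ∀ β : Finset (Fin v), β.card = t →
      ((((Finset.powersetCard k (Finset.univ : Finset (Fin v))).filter
          fun s => β ⊆ s ∧ (principalSub A s).det = a).card : ℂ)) =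
        ((-1 : ℂ) ^ k * (k.choose t : ℂ)) / ((a - b) * (v.choose t : ℂ)) * c 0 -
          b / (a - b) * ((v - t).choose (k - t) : ℂ) := by
  have hminors : ∀ δ : Finset (Fin v), #δ ≤ t → k + #δ ≤ Fintype.card (Fin v) →
      ∑ α ∈ powersetCard k δᶜ, (principalSub A α).det = (-1) ^ k * c #δ := by
    intro δ hδt hδk
    rw [Fintype.card_fin] at hδk
    have hcoeff := charpoly_submatrix_coeff_eq_sum_minors A δᶜ (k := k)
      (by rw [card_compl, Fintype.card_fin]; omega)
    rw [card_compl, Fintype.card_fin, Nat.sub_right_comm, ← principalSub, h2 #δ hδt δ rfl]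
      at hcoeff
    rw [hcoeff, ← mul_assoc, ← pow_add, Even.neg_one_pow ⟨k, rfl⟩, one_mul]
    rfl
  intro β hβ
  rw [card_filter_superset_eq_of_two_valued hab h1 (d := fun i => (-1) ^ k * c i) hminors β hβ,
    Fintype.card_fin]
  ring

/-- Main theorem: if the `k × k` principal minors of `A` take exactly the two values
`a ≠ b`, and for each `i ≤ t` the coefficient of `x^{v-k-i}` in the characteristic
polynomial of every principal `(v-i) × (v-i)` submatrix of `A` is a constant `c i`, then
the `k`-subsets `α` with `det A[α] = a` form a `t`-`(v,k,λ)` design with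
`λ = (-1)^k (k choose t) c₀ / ((a-b)(v choose t)) - b (v-t choose k-t)/(a-b)`. -/
theorem design_from_matrix {v t k : ℕ} (ht : 0 < t) (hk : 0 < k) (hv : 0 < v)
    (A : Matrix (Fin v) (Fin v) ℂ) (a b : ℂ) (hab : a ≠ b) (c : ℕ → ℂ)
    (h1 : (Finset.powersetCard k (Finset.univ : Finset (Fin v))).image
        (fun s => (principalSub A s).det) = {a, b})
    (h2 : ∀ i ≤ t, ∀ β : Finset (Fin v), β.card = i →
      (principalSub A βᶜ).charpoly.coeff (v - k - i) = c i) :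
    ∀ β : Finset (Fin v), β.card = t →
      ((((Finset.powersetCard k (Finset.univ : Finset (Fin v))).filter
          fun s => β ⊆ s ∧ (principalSub A s).det = a).card : ℂ)) =
        ((-1 : ℂ) ^ k * (k.choose t : ℂ)) / ((a - b) * (v.choose t : ℂ)) * c 0 -
          b / (a - b) * ((v - t).choose (k - t) : ℂ) :=
  design_from_matrix_general A a b hab c h1 h2
end

section
/- Let $S$ be a $4 \times 4$ real symmetric matrix with zero diagonal whose off-diagonal entries all lie in $\{-1,1\}$. Then $\det(S) \in \{-3, 5\}$. -/
/-!
Expanding along the first row, the determinant of a symmetric `4 × 4` matrix with zero diagonal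
is `x² + y² + z² - 2(xy + yz + zx)`, where `x = s₀₁s₂₃`, `y = s₀₂s₁₃`, `z = s₀₃s₁₂` are the
products over the three perfect matchings of `{0, 1, 2, 3}`. For a Seidel matrix these are signs,
so the determinant is `3 - 2e₂` with `e₂ = ((x + y + z)² - 3) / 2 ∈ {-1, 3}`.
-/

open Matrix

theorem Matrix.det_fin_four_of_isSymm_of_diag_eq_zero {R : Type*} [CommRing R]
    (S : Matrix (Fin 4) (Fin 4) R) (hsym : S.IsSymm) (hdiag : ∀ i, S i i = 0) :
    S.det = (S 0 1 * S 2 3) ^ 2 + (S 0 2 * S 1 3) ^ 2 + (S 0 3 * S 1 2) ^ 2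
      - 2 * ((S 0 1 * S 2 3) * (S 0 2 * S 1 3) + (S 0 2 * S 1 3) * (S 0 3 * S 1 2)
        + (S 0 3 * S 1 2) * (S 0 1 * S 2 3)) := by
  have hS : ∀ i j, S j i = S i j := fun i j => hsym.apply i j
  simp [det_succ_row_zero, Fin.sum_univ_succ, Fin.succAbove, hdiag, hS 0 1, hS 0 2, hS 0 3,
    hS 1 2, hS 1 3, hS 2 3]
  ring

theorem mul_eq_one_or_eq_neg_one {R : Type*} [Monoid R] [HasDistribNeg R] {a b : R}
    (ha : a = 1 ∨ a = -1) (hb : b = 1 ∨ b = -1) : a * b = 1 ∨ a * b = -1 := by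
  rcases ha with rfl | rfl <;> rcases hb with rfl | rfl <;> simp

theorem sq_add_sq_add_sq_sub_two_mul_eq_neg_three_or_five {R : Type*} [CommRing R] {x y z : R}
    (hx : x = 1 ∨ x = -1) (hy : y = 1 ∨ y = -1) (hz : z = 1 ∨ z = -1) :
    x ^ 2 + y ^ 2 + z ^ 2 - 2 * (x * y + y * z + z * x) = -3 ∨
      x ^ 2 + y ^ 2 + z ^ 2 - 2 * (x * y + y * z + z * x) = 5 := by
  rcases hx with rfl | rfl <;> rcases hy with rfl | rfl <;> rcases hz with rfl | rfl <;> norm_num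

/-- The determinant of a `4 × 4` symmetric Seidel matrix is `-3` or `5`. -/
theorem det_sym_seidel_four (S : Matrix (Fin 4) (Fin 4) ℝ)
    (hdiag : ∀ i, S i i = 0)
    (hoff : ∀ i j, i ≠ j → S i j = 1 ∨ S i j = -1)
    (hsym : Sᵀ = S) :
    S.det = -3 ∨ S.det = 5 := by
  have hmatch : ∀ i j k l : Fin 4, i ≠ j → k ≠ l →
      S i j * S k l = 1 ∨ S i j * S k l = -1 := fun i j k l hij hkl =>
    mul_eq_one_or_eq_neg_one (hoff i j hij) (hoff k l hkl)
  rw [det_fin_four_of_isSymm_of_diag_eq_zero S hsym hdiag]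
  exact sq_add_sq_add_sq_sub_two_mul_eq_neg_three_or_five (hmatch 0 1 2 3 (by decide) (by decide))
    (hmatch 0 2 1 3 (by decide) (by decide)) (hmatch 0 3 1 2 (by decide) (by decide))
end

section
/- Let $T$ be a $5 \times 5$ real skew-symmetric matrix with zero diagonal and off-diagonal entries in $\{-1,1\}$. Then the number of $4$-element subsets $\alpha \subseteq \{1,\dots,5\}$ with $\det(T[\alpha]) = 9$ is either $0$ or $2$. -/
/-!
A skew-symmetric `4 × 4` matrix has determinant `Pf ^ 2`, where
`Pf = a₀₁ a₂₃ - a₀₂ a₁₃ + a₀₃ a₁₂` is its Pfaffian. With entries `±1` the Pfaffian is a sum of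
three signs, so the determinant is `1` or `9`, and it is `9` exactly when the three terms agree.
The `4`-subsets of `Fin 5` are the complements of the singletons, so the theorem becomes a
statement about the five Pfaffians of the `4 × 4` principal submatrices, which depend only on the
ten signs above the diagonal; it is checked over all `2 ^ 10` sign patterns.
-/

open Matrix Finset
open scoped Classical

section

variable {ι R S : Type*} [CommRing R] [CommRing S]

def pfaffianFour (A : Matrix ι ι R) (a b c d : ι) : R :=
  A a b * A c d - A a c * A b d + A a d * A b c

theorem det_fin_four_eq_pfaffianFour_sq (A : Matrix (Fin 4) (Fin 4) R) (hdiag : ∀ i, A i i = 0)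
    (hskew : Aᵀ = -A) : A.det = pfaffianFour A 0 1 2 3 ^ 2 := by
  have hA : ∀ i j, A j i = -A i j := fun i j => by simpa using congrFun₂ hskew i j
  rw [det_succ_row_zero, Fin.sum_univ_four]
  simp only [det_fin_three, submatrix_apply, Fin.succAbove, Fin.reduceCastSucc, Fin.reduceLT,
    Fin.reduceSucc, ↓reduceIte, Fin.coe_ofNat_eq_mod, hdiag, pfaffianFour]
  rw [hA 0 1, hA 0 2, hA 0 3, hA 1 2, hA 1 3, hA 2 3]
  ring

theorem det_principalSub_map {n k : ℕ} (A : Matrix (Fin n) (Fin n) R) (f : Fin k ↪ Fin n) :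
    (principalSub A (univ.map f)).det = (A.submatrix f f).det := by
  let e : Fin k → univ.map f := fun i => ⟨f i, mem_map_of_mem f (mem_univ i)⟩
  have he : Function.Bijective e := by
    refine ⟨fun i j hij => f.injective (congrArg Subtype.val hij), fun ⟨x, hx⟩ => ?_⟩
    obtain ⟨i, -, rfl⟩ := mem_map.1 hx
    exact ⟨i, rfl⟩
  exact (det_submatrix_equiv_self (.ofBijective e he) _).symm

def pfaffianErase (A : Matrix (Fin 5) (Fin 5) R) (i : Fin 5) : R :=
  pfaffianFour A (i.succAbove 0) (i.succAbove 1) (i.succAbove 2) (i.succAbove 3)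

theorem RingHom.map_pfaffianErase (f : R →+* S) (A : Matrix (Fin 5) (Fin 5) R) (i : Fin 5) :
    f (pfaffianErase A i) = pfaffianErase (A.map f) i := by
  simp [pfaffianErase, pfaffianFour]

theorem det_principalSub_compl_singleton (A : Matrix (Fin 5) (Fin 5) R) (hdiag : ∀ i, A i i = 0)
    (hskew : Aᵀ = -A) (i : Fin 5) : (principalSub A {i}ᶜ).det = pfaffianErase A i ^ 2 := by
  have hmap : ({i}ᶜ : Finset (Fin 5)) = univ.map i.succAboveEmb := by
    simp [map_eq_image, Fin.image_succAbove_univ]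
  rw [hmap, det_principalSub_map, det_fin_four_eq_pfaffianFour_sq]
  · rfl
  · exact fun j => hdiag _
  · rw [transpose_submatrix, hskew]
    rfl

theorem card_filter_powersetCard_eq_card_filter_compl_singleton {α : Type*} [Fintype α]
    [DecidableEq α] {n : ℕ} (hcard : Fintype.card α = n + 1) (p : Finset α → Prop)
    [DecidablePred p] : #((powersetCard n univ).filter p) = #{a | p {a}ᶜ} := by
  have hset : powersetCard n univ =
      univ.map ⟨fun a : α => ({a} : Finset α)ᶜ, compl_injective.comp singleton_injective⟩ := by
    ext s
    simp only [mem_powersetCard, subset_univ, true_and, mem_map, mem_univ,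
      Function.Embedding.coeFn_mk]
    constructor
    · intro hs
      obtain ⟨a, ha⟩ := card_eq_one.1 (by rw [card_compl, hs, hcard]; simp : #sᶜ = 1)
      exact ⟨a, by rw [← ha, compl_compl]⟩
    · rintro ⟨a, rfl⟩
      simp [card_compl, hcard]
  rw [hset, filter_map, card_map]
  rfl

end

def signOf (b : Bool) : ℤ := if b then 1 else -1

def seidelOfSigns {n : ℕ} (σ : Fin n → Fin n → Bool) : Matrix (Fin n) (Fin n) ℤ :=
  fun i j => if i < j then signOf (σ i j) else if j < i then -signOf (σ j i) else 0

theorem seidelOfSigns_congr {n : ℕ} {σ τ : Fin n → Fin n → Bool}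
    (h : ∀ i j, i < j → σ i j = τ i j) : seidelOfSigns σ = seidelOfSigns τ := by
  ext i j
  simp only [seidelOfSigns]
  split_ifs with hij hji
  · rw [h i j hij]
  · rw [h j i hji]
  · rfl

theorem exists_eq_map_seidelOfSigns {R : Type*} [Ring R] {n : ℕ} (T : Matrix (Fin n) (Fin n) R)
    (hdiag : ∀ i, T i i = 0) (hoff : ∀ i j, i ≠ j → T i j = 1 ∨ T i j = -1) (hskew : Tᵀ = -T) :
    ∃ σ, T = (seidelOfSigns σ).map (Int.castRingHom R) := by
  have hsign : ∀ i j, i ≠ j → T i j = signOf (decide (T i j = 1)) := by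
    intro i j hij
    by_cases h1 : T i j = 1
    · simp [h1, signOf]
    · simp [signOf, (hoff i j hij).resolve_left h1]
  refine ⟨fun i j => decide (T i j = 1), ?_⟩
  ext i j
  rcases lt_trichotomy i j with hij | rfl | hji
  · simp [seidelOfSigns, hij, ← hsign i j hij.ne]
  · simp [seidelOfSigns, hdiag]
  · have hT : T i j = -T j i := by simpa using congrFun₂ hskew j i
    simp [seidelOfSigns, hji, hji.not_gt, hT, ← hsign j i hji.ne]

def upperSignsFive (a b c d e f g h i j : Bool) : Fin 5 → Fin 5 → Bool :=
  ![![false, a, b, c, d], ![false, false, e, f, g], ![false, false, false, h, i],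
    ![false, false, false, false, j], ![false, false, false, false, false]]

theorem card_pfaffianErase_sq_eq_nine (σ : Fin 5 → Fin 5 → Bool) :
    #{i | pfaffianErase (seidelOfSigns σ) i ^ 2 = 9} = 0 ∨
    #{i | pfaffianErase (seidelOfSigns σ) i ^ 2 = 9} = 2 := by
  have hcheck : ∀ a b c d e f g h i j : Bool,
      let A := seidelOfSigns (upperSignsFive a b c d e f g h i j);
      #{k | pfaffianErase A k ^ 2 = 9} = 0 ∨ #{k | pfaffianErase A k ^ 2 = 9} = 2 := by
    decide +kernel
  have hσ : seidelOfSigns σ = seidelOfSigns (upperSignsFive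
      (σ 0 1) (σ 0 2) (σ 0 3) (σ 0 4) (σ 1 2) (σ 1 3) (σ 1 4) (σ 2 3) (σ 2 4) (σ 3 4)) := by
    refine seidelOfSigns_congr fun i j hij => ?_
    fin_cases i <;> fin_cases j <;> first | rfl | exact absurd hij (by decide)
  rw [hσ]
  exact hcheck _ _ _ _ _ _ _ _ _ _

/-- For a `5 × 5` skew-symmetric Seidel matrix `T`, the number of `4`-subsets `α`
with `det T[α] = 9` is `0` or `2`. -/
theorem count_det_nine_skew_seidel_five (T : Matrix (Fin 5) (Fin 5) ℝ)
    (hdiag : ∀ i, T i i = 0)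
    (hoff : ∀ i j, i ≠ j → T i j = 1 ∨ T i j = -1)
    (hskew : Tᵀ = -T) :
    ((Finset.powersetCard 4 (Finset.univ : Finset (Fin 5))).filter
        fun s => (principalSub T s).det = 9).card = 0 ∨
    ((Finset.powersetCard 4 (Finset.univ : Finset (Fin 5))).filter
        fun s => (principalSub T s).det = 9).card = 2 := by
  rw [card_filter_powersetCard_eq_card_filter_compl_singleton (Fintype.card_fin 5)]
  simp_rw [det_principalSub_compl_singleton T hdiag hskew]
  obtain ⟨σ, rfl⟩ := exists_eq_map_seidelOfSigns T hdiag hoff hskew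
  simp_rw [← RingHom.map_pfaffianErase, Int.coe_castRingHom]
  exact_mod_cast card_pfaffianErase_sq_eq_nine σ
end

section
/- Define matrices $S_d$ recursively by $S_0 = (0)$ (the $1 \times 1$ zero matrix) and $S_{d+1} = \begin{pmatrix} S_d & I \\ I & -S_d \end{pmatrix}$, where $I$ is the identity of order $2^d$. Then for every $d \ge 0$, $S_d^2 = d \cdot I_{2^d}$, and consequently for $d \ge 1$ the characteristic polynomial of $S_d$ is $(x^2 - d)^{2^{d-1}}$. -/
open Matrix Polynomial

/-- The signed hypercube matrix: `S₀ = (0)` and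
`S_{d+1} = [[S_d, I], [I, -S_d]]`, of order `2^d`. -/
def signedCube : (d : ℕ) → Matrix (Fin (2 ^ d)) (Fin (2 ^ d)) ℝ
  | 0 => 0
  | d + 1 =>
      Matrix.reindex (finSumFinEquiv.trans (finCongr (by rw [pow_succ, mul_two])))
        (finSumFinEquiv.trans (finCongr (by rw [pow_succ, mul_two])))
        (Matrix.fromBlocks (signedCube d) 1 1 (-(signedCube d)))

/-! For `B = [[A, I], [I, -A]]` with `A² = c·I` one has `B² = (c + 1)·I`, so `S_d² = d·I` by
induction. Since the off-diagonal blocks of `x - B` are scalars,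
`det (x - B) = det ((x - A)(x + A) - I) = (x² - c - 1)ⁿ`, which for `A = S_d` is the
characteristic polynomial of `S_{d+1}`. -/

section BlockIdentities

variable {n R : Type*} [Fintype n] [DecidableEq n] [CommRing R]

theorem charmatrix_mul_charmatrix_neg (A : Matrix n n R) :
    charmatrix A * charmatrix (-A) = scalar n (X ^ 2 : R[X]) - (A * A).map C := by
  have hcomm := (scalar_commute (X : R[X]) (fun r => Commute.all _ r) (A.map C)).eq
  rw [charmatrix, charmatrix, map_neg, sub_neg_eq_add, RingHom.mapMatrix_apply, sub_mul, mul_add,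
    mul_add, hcomm, Matrix.map_mul, ← map_mul, ← pow_two]
  abel

theorem det_fromBlocks_neg_one_neg_one (P Q : Matrix n n R) :
    (fromBlocks P (-1) (-1) Q).det = (P * Q - 1).det := by
  -- multiplying by the symplectic `J = [[0, -I], [I, 0]]` (of determinant 1) moves `I` to the corner
  have hJ : (J n R).det = 1 := SymplecticGroup.det_eq_one (SymplecticGroup.J_mem n R)
  rw [← one_mul (fromBlocks P (-1) (-1) Q).det, ← hJ, ← det_mul, J, fromBlocks_multiply]
  simp [det_fromBlocks_one₁₁, sub_eq_add_neg, add_comm]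

variable {A : Matrix n n R} {c : R}

theorem fromBlocks_one_one_neg_mul_self (hA : A * A = c • 1) :
    fromBlocks A 1 1 (-A) * fromBlocks A 1 1 (-A) = (c + 1) • 1 := by
  rw [fromBlocks_multiply, ← fromBlocks_one, fromBlocks_smul]
  simp [hA, add_smul, add_comm]

theorem charpoly_fromBlocks_one_one_neg (hA : A * A = c • 1) :
    (fromBlocks A 1 1 (-A)).charpoly = (X ^ 2 - C (c + 1)) ^ Fintype.card n := by
  have hmap : (A * A).map C = scalar n (C c) := by
    ext i j
    by_cases h : i = j <;> simp [hA, h, one_apply]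
  rw [charpoly, charmatrix_fromBlocks, Matrix.map_one _ C_0 C_1, det_fromBlocks_neg_one_neg_one,
    charmatrix_mul_charmatrix_neg, hmap, ← map_sub, ← map_one (scalar n), ← map_sub, scalar_apply,
    det_diagonal, Finset.prod_const, Finset.card_univ, map_add, C_1, sub_sub]

end BlockIdentities

theorem signedCube_mul_self (d : ℕ) : signedCube d * signedCube d = (d : ℝ) • 1 := by
  induction d with
  | zero => simp [signedCube]
  | succ d ih =>
    rw [signedCube, ← coe_reindexAlgEquiv ℝ ℝ, ← map_mul, fromBlocks_one_one_neg_mul_self ih,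
      map_smul, map_one, Nat.cast_succ]

theorem charpoly_signedCube_succ (d : ℕ) :
    (signedCube (d + 1)).charpoly = (X ^ 2 - C ((d + 1 : ℕ) : ℝ)) ^ 2 ^ d := by
  rw [signedCube, charpoly_reindex, charpoly_fromBlocks_one_one_neg (signedCube_mul_self d),
    Fintype.card_fin, Nat.cast_succ]

/-- `S_d² = d·I`, and for `d ≥ 1` the characteristic polynomial of `S_d`
is `(x² - d)^(2^(d-1))`. -/
theorem signedCube_sq_and_charpoly :
    (∀ d : ℕ, signedCube d ^ 2 = (d : ℝ) • 1) ∧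
    (∀ d : ℕ, 1 ≤ d →
      (signedCube d).charpoly = (X ^ 2 - C (d : ℝ)) ^ 2 ^ (d - 1)) := by
  refine ⟨fun d => (sq _).trans (signedCube_mul_self d), fun d hd => ?_⟩
  obtain ⟨d, rfl⟩ := Nat.exists_eq_add_of_le' hd
  exact charpoly_signedCube_succ d
end
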